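/- arXiv:1806.10752 — 4 statements merged into one kernel-verified Lean document; each statement's English description precedes it below -/
import Mathlib

section
/- For every integer α ≥ 0 and every real τ > -1/2, one has Γ((2τ+1)(α+1)) / α! ≍ (2τ+1)^{(2τ+1)α} · (α+1)^τ · (α!)^{2τ}, i.e. there exist constants c, C > 0 depending only on τ such that c·(2τ+1)^{(2τ+1)α}(α+1)^τ(α!)^{2τ} ≤ Γ((2τ+1)(α+1))/α! ≤ C·(2τ+1)^{(2τ+1)α}(α+1)^τ(α!)^{2τ}. -/
/-! Write `log Γ x = (x - 1/2) log x - x + E x` (`E = stirlingError`). Stirling's formula for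
`n!` bounds `E` at the integers, and log-convexity of `Γ` (`Γ n (n-1)^θ ≤ Γ (n + θ) ≤ Γ n n^θ`
for `0 ≤ θ ≤ 1`) spreads the bound to all of `[2, ∞)`. With `s = 2τ + 1`, the logarithm of the
ratio of the two sides of the theorem is exactly `E (s (α+1)) - s E (α+1) + (s - 1/2) log s`: the
powers of `α + 1` cancel because `τ = (s - 1)/2`. It is therefore bounded for large `α`, hence
for all `α`. -/

open Real Filter Asymptotics

lemma log_sub_log_le_div {a b : ℝ} (ha : 0 < a) (hb : 0 < b) : log b - log a ≤ (b - a) / a := by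
  rw [← log_div hb.ne' ha.ne', sub_div, div_self ha.ne']
  exact log_le_sub_one_of_pos (div_pos hb ha)

noncomputable def stirlingError (x : ℝ) : ℝ := log (Gamma x) - ((x - 1 / 2) * log x - x)

lemma stirlingError_natCast {n : ℕ} (hn : n ≠ 0) :
    stirlingError n = log (√2 * Stirling.stirlingSeq n) := by
  obtain ⟨m, rfl⟩ := Nat.exists_eq_succ_of_ne_zero hn
  have hm : (0:ℝ) < m + 1 := by positivity
  rw [log_mul (by positivity) (Stirling.stirlingSeq'_pos m).ne', Stirling.log_stirlingSeq_formula,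
    stirlingError, Nat.cast_succ, Gamma_nat_eq_factorial, Nat.factorial_succ, Nat.cast_mul,
    Nat.cast_succ, log_mul hm.ne' (by positivity), log_mul two_ne_zero hm.ne',
    log_div hm.ne' (exp_pos 1).ne', log_exp, log_sqrt zero_le_two]
  ring

lemma stirlingError_natCast_mem_Icc {n : ℕ} (hn : n ≠ 0) : stirlingError n ∈ Set.Icc 0 1 := by
  obtain ⟨m, rfl⟩ := Nat.exists_eq_succ_of_ne_zero hn
  have hle : Stirling.stirlingSeq (m + 1) ≤ exp 1 / √2 := by
    simpa using Stirling.stirlingSeq'_antitone (Nat.zero_le m)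
  have hge : √π ≤ Stirling.stirlingSeq (m + 1) := Stirling.sqrt_pi_le_stirlingSeq hn
  rw [stirlingError_natCast hn]
  constructor
  · apply log_nonneg
    calc (1:ℝ) ≤ √2 * √π := by
          rw [← sqrt_mul zero_le_two]
          exact one_le_sqrt.mpr (by nlinarith [pi_gt_three])
      _ ≤ _ := by gcongr
  · calc log (√2 * Stirling.stirlingSeq (m + 1)) ≤ log (√2 * (exp 1 / √2)) := by
          have := Stirling.stirlingSeq'_pos m
          gcongr
      _ = 1 := by rw [mul_div_cancel₀ _ (by positivity), log_exp]

lemma log_Gamma_natCast_add_sub_mem {n : ℕ} (hn : 2 ≤ n) {θ : ℝ} (h0 : 0 ≤ θ) (h1 : θ ≤ 1) :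
    θ * log (n - 1) ≤ log (Gamma (n + θ)) - log (Gamma n) ∧
      log (Gamma (n + θ)) - log (Gamma n) ≤ θ * log n := by
  rcases h0.eq_or_lt with rfl | hθ
  · simp
  have hfeq : ∀ {y : ℝ}, 0 < y → (log ∘ Gamma) (y + 1) = (log ∘ Gamma) y + log y := fun hy => by
    simp only [Function.comp, Gamma_add_one hy.ne', log_mul hy.ne' (Gamma_pos_of_pos hy).ne',
      add_comm]
  have hge := BohrMollerup.f_add_nat_ge convexOn_log_Gamma hfeq hn hθ
  have hle := BohrMollerup.f_add_nat_le convexOn_log_Gamma hfeq (n := n) (by omega) hθ h1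
  simp only [Function.comp] at hge hle
  constructor <;> linarith

lemma abs_stirlingError_le {x : ℝ} (hx : 2 ≤ x) : |stirlingError x| ≤ 4 := by
  set n := ⌊x⌋₊
  have hn : 2 ≤ n := Nat.le_floor (by exact_mod_cast hx)
  have hnR : (2:ℝ) ≤ n := by exact_mod_cast hn
  have hnx : (n:ℝ) ≤ x := Nat.floor_le (by linarith)
  have hxn : x < n + 1 := Nat.lt_floor_add_one x
  obtain ⟨hΓlo, hΓhi⟩ :=
    log_Gamma_natCast_add_sub_mem hn (θ := x - n) (by linarith) (by linarith)
  rw [add_sub_cancel] at hΓlo hΓhi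
  obtain ⟨hn0, hn1⟩ := stirlingError_natCast_mem_Icc (n := n) (by omega)
  have hlog_step : log n - log (n - 1) ≤ 1 :=
    (log_sub_log_le_div (by linarith) (by linarith)).trans
      ((div_le_one (by linarith)).2 (by linarith))
  have hmono : log (n - 1) ≤ log n := log_le_log (by linarith) (by linarith)
  have hθstep : (x - n) * (log n - log (n - 1)) ≤ 1 := by nlinarith
  have hgrowth : 0 ≤ (x - 1 / 2) * (log x - log n) :=
    mul_nonneg (by linarith) (sub_nonneg.2 (log_le_log (by linarith) hnx))
  have hgrowth' : (x - 1 / 2) * (log x - log n) ≤ 2 :=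
    calc (x - 1 / 2) * (log x - log n) ≤ (x - 1 / 2) * ((x - n) / n) :=
          mul_le_mul_of_nonneg_left (log_sub_log_le_div (by linarith) (by linarith)) (by linarith)
      _ ≤ 2 := by
          rw [mul_div_assoc', div_le_iff₀ (by linarith)]
          nlinarith
  unfold stirlingError at hn0 hn1 ⊢
  rw [abs_le]
  constructor <;> linarith

lemma stirlingError_isBigO_one : stirlingError =O[atTop] (fun _ => (1:ℝ)) :=
  IsBigO.of_bound 4 <| by
    filter_upwards [eventually_ge_atTop 2] with x hx
    simpa using abs_stirlingError_le hx

lemma log_Gamma_ratio_eq {τ a : ℝ} (hτ : 0 < 2 * τ + 1) (ha : 0 < a + 1) :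
    log (Gamma ((2 * τ + 1) * (a + 1)) / Gamma (a + 1) /
        ((2 * τ + 1) ^ ((2 * τ + 1) * a) * (a + 1) ^ τ * Gamma (a + 1) ^ (2 * τ))) =
      stirlingError ((2 * τ + 1) * (a + 1)) - (2 * τ + 1) * stirlingError (a + 1) +
        (2 * τ + 1 / 2) * log (2 * τ + 1) := by
  have hΓ : 0 < Gamma (a + 1) := Gamma_pos_of_pos ha
  rw [log_div (by positivity) (by positivity), log_div (by positivity) hΓ.ne',
    log_mul (by positivity) (by positivity), log_mul (by positivity) (by positivity),
    log_rpow hτ, log_rpow ha, log_rpow hΓ]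
  unfold stirlingError
  rw [log_mul hτ.ne' ha.ne']
  ring

lemma exp_neg_mul_le_and_le_exp_mul_of_abs_log_div_le {a b B : ℝ} (ha : 0 < a) (hb : 0 < b)
    (h : |log (a / b)| ≤ B) : exp (-B) * b ≤ a ∧ a ≤ exp B * b := by
  rw [abs_le] at h
  have hab : a / b = exp (log (a / b)) := (exp_log (div_pos ha hb)).symm
  constructor
  · rw [← le_div_iff₀ hb, hab]
    exact exp_le_exp.2 (by linarith)
  · rw [← div_le_iff₀ hb, hab]
    exact exp_le_exp.2 h.2

theorem stirling_gamma_ratio (τ : ℝ) (hτ : τ > -(1/2)) :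
    ∃ c C : ℝ, 0 < c ∧ 0 < C ∧ ∀ α : ℕ,
      c * ((2*τ+1) ^ ((2*τ+1) * (α:ℝ)) * ((α:ℝ)+1) ^ τ * (Nat.factorial α : ℝ) ^ (2*τ))
        ≤ Real.Gamma ((2*τ+1) * ((α:ℝ)+1)) / (Nat.factorial α : ℝ) ∧
      Real.Gamma ((2*τ+1) * ((α:ℝ)+1)) / (Nat.factorial α : ℝ)
        ≤ C * ((2*τ+1) ^ ((2*τ+1) * (α:ℝ)) * ((α:ℝ)+1) ^ τ * (Nat.factorial α : ℝ) ^ (2*τ)) := by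
  have hτ' : 0 < 2 * τ + 1 := by linarith
  have hsucc : Tendsto (fun α : ℕ => (α : ℝ) + 1) atTop atTop :=
    tendsto_atTop_add_const_right _ 1 tendsto_natCast_atTop_atTop
  have hbounded : (fun α : ℕ => stirlingError ((2 * τ + 1) * ((α : ℝ) + 1)) -
      (2 * τ + 1) * stirlingError ((α : ℝ) + 1) + (2 * τ + 1 / 2) * log (2 * τ + 1)) =O[atTop]
      (fun _ => (1:ℝ)) :=
    ((stirlingError_isBigO_one.comp_tendsto (hsucc.const_mul_atTop hτ')).sub
      ((stirlingError_isBigO_one.comp_tendsto hsucc).const_mul_left _)).add (isBigO_const_one ..)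
  obtain ⟨B, hB⟩ := isBigO_one_nat_atTop_iff.1 hbounded
  refine ⟨exp (-B), exp B, exp_pos _, exp_pos _, fun α => ?_⟩
  rw [← Gamma_nat_eq_factorial]
  refine exp_neg_mul_le_and_le_exp_mul_of_abs_log_div_le (by positivity) (by positivity) ?_
  rw [log_Gamma_ratio_eq hτ' (by positivity)]
  exact hB α
end

section
/- Let τ > -1/2 and 0 < r₀ < r in each coordinate (r₀, r ∈ (0,∞)^d). Suppose F(z) = Σ_α c(α) z^α/√(α!) is entire on ℂ^d with |c(α)| ≤ C (2r₀/(2τ+1))^{((2τ+1)/2)·α} (α!)^{-τ} for all α ∈ ℕ^d. Then |F(z)| ≲ exp(r_1|z_1|^{2/(2τ+1)} + ⋯ + r_d|z_d|^{2/(2τ+1)}) for all z ∈ ℂ^d. -/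
/-!
Put `σ = (2τ+1)/2 > 0`. Since `w ^ n / n! ≤ exp w` for `w ≥ 0`, raising to the power `σ` with
`w = (ρ/σ) t^{1/σ}` gives `(ρ/σ)^{σn} (n!)^{-σ} t^n ≤ exp (ρ t^{1/σ})`. The coefficient bound
makes the `α`-th term of the series at most `C ∏ⱼ (r₀ⱼ/σ)^{σαⱼ} (αⱼ!)^{-σ} |zⱼ|^{αⱼ}`, and
writing `r₀ⱼ/σ = (r₀ⱼ/rⱼ)(rⱼ/σ)` bounds it by `C exp (∑ⱼ rⱼ |zⱼ|^{1/σ}) ∏ⱼ qⱼ^{αⱼ}` with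
`qⱼ = (r₀ⱼ/rⱼ)^σ < 1`. The geometric series `∑_α ∏ⱼ qⱼ^{αⱼ}` converges, which gives the constant.
-/

open Real Finset
open scoped Nat

theorem summable_pi_prod_of_nonneg {ι κ : Type*} [Fintype ι] {f : ι → κ → ℝ}
    (hf : ∀ i, Summable (f i)) (hf₀ : ∀ i k, 0 ≤ f i k) :
    Summable fun x : ι → κ => ∏ i, f i (x i) := by
  classical
  refine summable_of_sum_le (c := ∏ i, ∑' k, f i k)
    (fun x => prod_nonneg fun i _ => hf₀ i (x i)) fun u => ?_
  calc ∑ x ∈ u, ∏ i, f i (x i)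
      ≤ ∑ x ∈ Fintype.piFinset fun i => u.image (· i), ∏ i, f i (x i) :=
        sum_le_sum_of_subset_of_nonneg
          (fun x hx => Fintype.mem_piFinset.2 fun i => mem_image_of_mem _ hx)
          fun x _ _ => prod_nonneg fun i _ => hf₀ i (x i)
    _ = ∏ i, ∑ k ∈ u.image (· i), f i k := (prod_univ_sum _ _).symm
    _ ≤ ∏ i, ∑' k, f i k :=
        prod_le_prod (fun i _ => sum_nonneg fun k _ => hf₀ i k)
          fun i _ => (hf i).sum_le_tsum _ fun k _ => hf₀ i k

theorem rpow_mul_factorial_rpow_neg_le_exp {x σ : ℝ} (hx : 0 ≤ x) (hσ : 0 ≤ σ) (n : ℕ) :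
    x ^ (σ * n) * (n ! : ℝ) ^ (-σ) ≤ exp (σ * x) := by
  have hfac : (0 : ℝ) ≤ n ! := by positivity
  calc x ^ (σ * n) * (n ! : ℝ) ^ (-σ) = (x ^ n / n !) ^ σ := by
        rw [div_rpow (by positivity) hfac, rpow_neg hfac, ← rpow_natCast, ← rpow_mul hx,
          mul_comm σ, div_eq_mul_inv]
    _ ≤ exp x ^ σ := rpow_le_rpow (by positivity) (pow_div_factorial_le_exp x hx n) hσ
    _ = exp (σ * x) := by rw [← exp_mul, mul_comm]

theorem div_rpow_mul_factorial_rpow_neg_mul_pow_le {σ ρ₀ ρ t : ℝ} (hσ : 0 < σ) (hρ₀ : 0 ≤ ρ₀)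
    (hρ : 0 < ρ) (ht : 0 ≤ t) (n : ℕ) :
    (ρ₀ / σ) ^ (σ * n) * (n ! : ℝ) ^ (-σ) * t ^ n
      ≤ ((ρ₀ / ρ) ^ σ) ^ n * exp (ρ * t ^ (1 / σ)) := by
  set x := ρ / σ * t ^ (1 / σ)
  have hx : 0 ≤ x := by positivity
  have hsplit : (ρ₀ / σ) ^ (σ * n) * t ^ n = ((ρ₀ / ρ) ^ σ) ^ n * x ^ (σ * n) := by
    have ht' : (t ^ (1 / σ)) ^ (σ * n) = t ^ n := by
      rw [← rpow_mul ht, one_div, inv_mul_cancel_left₀ hσ.ne', rpow_natCast]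
    have hρ₀' : (ρ₀ / ρ) ^ (σ * n) = ((ρ₀ / ρ) ^ σ) ^ n := by
      rw [rpow_mul (by positivity), rpow_natCast]
    rw [mul_rpow (by positivity) (by positivity), ht', ← hρ₀', ← mul_assoc,
      ← mul_rpow (by positivity) (by positivity), div_mul_div_cancel₀ hρ.ne']
  have hσx : σ * x = ρ * t ^ (1 / σ) := by
    simp only [x]; field_simp
  calc (ρ₀ / σ) ^ (σ * n) * (n ! : ℝ) ^ (-σ) * t ^ n
      = ((ρ₀ / ρ) ^ σ) ^ n * (x ^ (σ * n) * (n ! : ℝ) ^ (-σ)) := by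
        rw [mul_right_comm, hsplit, mul_assoc]
    _ ≤ ((ρ₀ / ρ) ^ σ) ^ n * exp (σ * x) := by
        gcongr
        exact rpow_mul_factorial_rpow_neg_le_exp hx hσ.le n
    _ = ((ρ₀ / ρ) ^ σ) ^ n * exp (ρ * t ^ (1 / σ)) := by rw [hσx]

theorem coeff_mul_pow_mul_factorial_rpow_le {τ ρ₀ ρ t : ℝ} (hτ : -(1/2) < τ) (hρ₀ : 0 ≤ ρ₀)
    (hρ : 0 < ρ) (ht : 0 ≤ t) (n : ℕ) :
    (2 * ρ₀ / (2*τ+1)) ^ (((2*τ+1)/2) * (n : ℝ)) * (n ! : ℝ) ^ (-τ)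
        * (t ^ n * (n ! : ℝ) ^ (-(1/2) : ℝ))
      ≤ ((ρ₀ / ρ) ^ ((2*τ+1)/2)) ^ n * exp (ρ * t ^ (2/(2*τ+1))) := by
  have hσ : 0 < (2*τ+1)/2 := by linarith
  have hfac : (0 : ℝ) < n ! := by positivity
  calc _ = (ρ₀ / ((2*τ+1)/2)) ^ (((2*τ+1)/2) * (n : ℝ)) * (n ! : ℝ) ^ (-((2*τ+1)/2))
          * t ^ n := by
        rw [show -((2*τ+1)/2) = -τ + -(1/2) by ring, rpow_add hfac, div_div_eq_mul_div,
          mul_comm ρ₀]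
        ring
    _ ≤ ((ρ₀ / ρ) ^ ((2*τ+1)/2)) ^ n * exp (ρ * t ^ (1 / ((2*τ+1)/2))) :=
        div_rpow_mul_factorial_rpow_neg_mul_pow_le hσ hρ₀ hρ ht n
    _ = _ := by rw [one_div_div]

theorem norm_mul_prod_pow_div_sqrt_prod_factorial {ι : Type*} [Fintype ι] (a : ℂ) (z : ι → ℂ)
    (α : ι → ℕ) :
    ‖a * (∏ j, z j ^ α j) / (Real.sqrt (∏ j, (Nat.factorial (α j) : ℝ)) : ℂ)‖
      = ‖a‖ * ∏ j, (‖z j‖ ^ α j * (Nat.factorial (α j) : ℝ) ^ (-(1/2) : ℝ)) := by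
  have hfac : ∀ j, (0 : ℝ) ≤ Nat.factorial (α j) := fun j => by positivity
  rw [norm_div, norm_mul, Complex.norm_real, Real.norm_of_nonneg (Real.sqrt_nonneg _), norm_prod,
    Real.sqrt_eq_rpow, ← Real.finsetProd_rpow _ _ fun j _ => hfac j, mul_div_assoc,
    ← prod_div_distrib]
  congr 1
  refine prod_congr rfl fun j _ => ?_
  rw [norm_pow, rpow_neg (hfac j), div_eq_mul_inv, one_div]

theorem norm_mul_prod_pow_div_sqrt_prod_factorial_le {ι : Type*} [Fintype ι] {τ C : ℝ}
    {r₀ r : ι → ℝ} (hτ : -(1/2) < τ) (hr₀ : ∀ j, 0 ≤ r₀ j) (hr : ∀ j, 0 < r j) (hC : 0 ≤ C)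
    {a : ℂ} {α : ι → ℕ}
    (ha : ‖a‖ ≤ C * ∏ j, (2 * r₀ j / (2*τ+1)) ^ (((2*τ+1)/2) * (α j : ℝ))
                        * (Nat.factorial (α j) : ℝ) ^ (-τ))
    (z : ι → ℂ) :
    ‖a * (∏ j, z j ^ α j) / (Real.sqrt (∏ j, (Nat.factorial (α j) : ℝ)) : ℂ)‖
      ≤ C * exp (∑ j, r j * ‖z j‖ ^ (2/(2*τ+1))) * ∏ j, ((r₀ j / r j) ^ ((2*τ+1)/2)) ^ α j := by
  rw [norm_mul_prod_pow_div_sqrt_prod_factorial, exp_sum, mul_assoc, ← prod_mul_distrib]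
  calc _ ≤ (C * ∏ j, (2 * r₀ j / (2*τ+1)) ^ (((2*τ+1)/2) * (α j : ℝ))
              * (Nat.factorial (α j) : ℝ) ^ (-τ))
            * ∏ j, (‖z j‖ ^ α j * (Nat.factorial (α j) : ℝ) ^ (-(1/2) : ℝ)) := by
        gcongr
    _ = C * ∏ j, ((2 * r₀ j / (2*τ+1)) ^ (((2*τ+1)/2) * (α j : ℝ))
              * (Nat.factorial (α j) : ℝ) ^ (-τ)
            * (‖z j‖ ^ α j * (Nat.factorial (α j) : ℝ) ^ (-(1/2) : ℝ))) := by
        rw [mul_assoc, ← prod_mul_distrib]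
    _ ≤ _ := by
        refine mul_le_mul_of_nonneg_left (prod_le_prod (fun j _ => ?_) fun j _ => ?_) hC
        · have := hr₀ j
          have : 0 < 2*τ+1 := by linarith
          positivity
        · rw [mul_comm (exp _)]
          exact coeff_mul_pow_mul_factorial_rpow_le hτ (hr₀ j) (hr j) (norm_nonneg _) (α j)

theorem coeff_bound_implies_growth (d : ℕ) (τ : ℝ) (hτ : τ > -(1/2))
    (r₀ r : Fin d → ℝ) (hr₀ : ∀ j, 0 < r₀ j) (hlt : ∀ j, r₀ j < r j)
    (c : (Fin d → ℕ) → ℂ) (F : (Fin d → ℂ) → ℂ)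
    (hF : ∀ z : Fin d → ℂ,
      HasSum (fun α : Fin d → ℕ =>
        c α * (∏ j, (z j) ^ (α j)) / (Real.sqrt (∏ j, (Nat.factorial (α j) : ℝ)) : ℂ)) (F z))
    (C : ℝ)
    (hc : ∀ α : Fin d → ℕ,
      ‖c α‖ ≤ C * ∏ j, (2 * r₀ j / (2*τ+1)) ^ (((2*τ+1)/2) * (α j : ℝ))
                        * (Nat.factorial (α j) : ℝ) ^ (-τ)) :
    ∃ C' : ℝ, 0 < C' ∧ ∀ z : Fin d → ℂ,
      ‖F z‖ ≤ C' * Real.exp (∑ j, r j * ‖z j‖ ^ (2/(2*τ+1))) := by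
  have hr : ∀ j, 0 < r j := fun j => (hr₀ j).trans (hlt j)
  set q : Fin d → ℝ := fun j => (r₀ j / r j) ^ ((2*τ+1)/2)
  have hq₀ : ∀ j, 0 ≤ q j := fun j => rpow_nonneg (div_pos (hr₀ j) (hr j)).le _
  have hq₁ : ∀ j, q j < 1 := fun j =>
    rpow_lt_one (div_pos (hr₀ j) (hr j)).le ((div_lt_one (hr j)).2 (hlt j)) (by linarith)
  have hS : Summable fun α : Fin d → ℕ => ∏ j, q j ^ α j :=
    summable_pi_prod_of_nonneg (fun j => summable_geometric_of_lt_one (hq₀ j) (hq₁ j))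
      fun j n => pow_nonneg (hq₀ j) n
  set S := ∑' α : Fin d → ℕ, ∏ j, q j ^ α j
  have hS₀ : 0 ≤ S := tsum_nonneg fun α => prod_nonneg fun j _ => pow_nonneg (hq₀ j) _
  have hC : 0 ≤ C := (norm_nonneg _).trans (by simpa using hc 0)
  refine ⟨C * S + 1, by positivity, fun z => ?_⟩
  calc ‖F z‖
      ≤ ∑' α : Fin d → ℕ, C * exp (∑ j, r j * ‖z j‖ ^ (2/(2*τ+1))) * ∏ j, q j ^ α j :=
        (hF z).norm_le_of_bounded (hS.mul_left _).hasSum fun α =>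
          norm_mul_prod_pow_div_sqrt_prod_factorial_le hτ (fun j => (hr₀ j).le) hr hC (hc α) z
    _ = C * S * exp (∑ j, r j * ‖z j‖ ^ (2/(2*τ+1))) := by rw [tsum_mul_left]; ring
    _ ≤ (C * S + 1) * exp (∑ j, r j * ‖z j‖ ^ (2/(2*τ+1))) := by gcongr; linarith
end

section
/- Let τ > -1/2 and 0 < r₀ < r coordinatewise in (0,∞)^d. Suppose F(z) = Σ_α c(α) z^α/√(α!) is entire on ℂ^d and satisfies |F(z)| ≲ exp(r_{0,1}|z_1|^{2/(2τ+1)} + ⋯ + r_{0,d}|z_d|^{2/(2τ+1)}). Then |c(α)| ≲ (2r/(2τ+1))^{((2τ+1)/2)·α} (α!)^{-τ} for all α ∈ ℕ^d. -/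
/-!
Cauchy's estimate on the torus `|z j| = ρ j` gives
`‖c α‖ ≤ C ∏ j, √(α j)! exp (r₀ j * ρ j ^ p) / ρ j ^ α j` with `p = 2 / (2τ+1)`. For the radius with
`ρ j ^ p = (2τ+1) n / (2 r j)`, `n = α j`, the `j`-th factor is
`(2 r j / (2τ+1)) ^ (n / p) * n! ^ (-τ)` times `(n! e^{θ n} / n^n) ^ (1 / p)`, `θ = r₀ j / r j`.
Since `θ < 1`, Stirling's bound `n! ≤ e √n (n/e)^n` gives `n! e^{θ n} ≤ n^n / (1 - θ)`.
-/

open Real MeasureTheory Finset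
open scoped Nat

lemma integral_Ioc_exp_int_mul_I (k : ℤ) :
    ∫ t in Set.Ioc 0 (2 * π), Complex.exp (k * t * Complex.I) =
      if k = 0 then (2 * π : ℂ) else 0 := by
  rw [← intervalIntegral.integral_of_le (by positivity)]
  split_ifs with hk
  · simp [hk]
  · have hkI : (k : ℂ) * Complex.I ≠ 0 := by simpa using hk
    have h2π : Complex.exp (k * Complex.I * (2 * π : ℝ)) = 1 := by
      simpa [mul_assoc, mul_comm, mul_left_comm] using Complex.exp_int_mul_two_pi_mul_I k
    simp_rw [mul_right_comm _ _ Complex.I]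
    rw [integral_exp_mul_complex hkI, h2π]
    simp

noncomputable abbrev torusMeasure (ι : Type*) [Fintype ι] : Measure (ι → ℝ) :=
  Measure.pi fun _ => volume.restrict (Set.Ioc 0 (2 * π))

variable {ι : Type*} [Fintype ι]

lemma torusMeasure_real_univ : (torusMeasure ι).real Set.univ = (2 * π) ^ Fintype.card ι := by
  simp [measureReal_def, Measure.pi_univ, Real.volume_Ioc, pi_pos.le]

lemma integral_torusMeasure_prod_exp_mul_I (β α : ι → ℕ) :
    ∫ θ, ∏ j, Complex.exp (((β j : ℤ) - α j : ℤ) * θ j * Complex.I) ∂torusMeasure ι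
      = if β = α then (2 * π : ℂ) ^ Fintype.card ι else 0 := by
  rw [integral_fintype_prod_eq_prod
    (fun j (t : ℝ) => Complex.exp (((β j : ℤ) - α j : ℤ) * t * Complex.I))]
  simp_rw [integral_Ioc_exp_int_mul_I, sub_eq_zero, Nat.cast_inj, Fintype.prod_ite_zero,
    funext_iff, prod_const, card_univ]

variable {a : (ι → ℕ) → ℂ} {f : (ι → ℂ) → ℂ} {ρ : ι → ℝ}

theorem integral_torusMeasure_mul_exp_eq_coeff
    (hf : ∀ z, HasSum (fun β => a β * ∏ j, z j ^ β j) (f z)) (hρ : ∀ j, 0 ≤ ρ j) (α : ι → ℕ) :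
    ∫ θ, f (fun j => ρ j * Complex.exp (θ j * Complex.I)) *
        ∏ j, Complex.exp (-(α j * θ j * Complex.I)) ∂torusMeasure ι =
      a α * (∏ j, (ρ j : ℂ) ^ α j) * (2 * π) ^ Fintype.card ι := by
  set e : (ι → ℕ) → (ι → ℝ) → ℂ :=
    fun β θ => ∏ j, Complex.exp (((β j : ℤ) - α j : ℤ) * θ j * Complex.I)
  set g : (ι → ℕ) → (ι → ℝ) → ℂ := fun β θ => a β * (∏ j, (ρ j : ℂ) ^ β j) * e β θ
  have hg : ∀ θ, HasSum (g · θ) (f (fun j => ρ j * Complex.exp (θ j * Complex.I)) *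
      ∏ j, Complex.exp (-(α j * θ j * Complex.I))) := fun θ => by
    refine ((hf _).mul_right _).congr_fun fun β => ?_
    simp only [g, e, mul_assoc, ← prod_mul_distrib]
    refine congrArg _ (prod_congr rfl fun j _ => ?_)
    rw [mul_pow, mul_assoc, ← Complex.exp_nat_mul, ← Complex.exp_add]
    push_cast
    ring_nf
  have hg_norm : ∀ β θ, ‖g β θ‖ = ‖a β‖ * ∏ j, ρ j ^ β j := fun β θ => by
    simp [g, e, Complex.norm_exp, abs_of_nonneg (hρ _)]
  have hg_int : ∀ β, Integrable (g β) (torusMeasure ι) := fun β =>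
    Integrable.of_bound (by fun_prop) _ (Filter.Eventually.of_forall fun θ => (hg_norm β θ).le)
  have hsummable : Summable fun β => ∫ θ, ‖g β θ‖ ∂torusMeasure ι := by
    simpa only [hg_norm, integral_const, smul_eq_mul, abs_of_nonneg (hρ _), norm_mul, norm_prod,
      norm_pow, Complex.norm_real, norm_eq_abs] using
      (hf fun j => (ρ j : ℂ)).summable.norm.mul_left ((torusMeasure ι).real Set.univ)
  have hg_integral : ∀ β, ∫ θ, g β θ ∂torusMeasure ι =
      if β = α then a α * (∏ j, (ρ j : ℂ) ^ α j) * (2 * π) ^ Fintype.card ι else 0 := by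
    intro β
    simp only [g, e]
    rw [integral_const_mul, integral_torusMeasure_prod_exp_mul_I]
    split_ifs with h
    · rw [h]
    · rw [mul_zero]
  have hsum := hasSum_integral_of_summable_integral_norm hg_int hsummable
  simp only [hg_integral, fun θ => (hg θ).tsum_eq] at hsum
  exact hsum.unique (hasSum_ite_eq α _)

theorem norm_coeff_mul_prod_pow_le (hf : ∀ z, HasSum (fun β => a β * ∏ j, z j ^ β j) (f z))
    (hρ : ∀ j, 0 ≤ ρ j) {M : ℝ} (hM : ∀ z, (∀ j, ‖z j‖ = ρ j) → ‖f z‖ ≤ M) (α : ι → ℕ) :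
    ‖a α‖ * ∏ j, ρ j ^ α j ≤ M := by
  have hbound := norm_integral_le_of_norm_le_const (μ := torusMeasure ι) (C := M)
    (f := fun θ => f (fun j => ρ j * Complex.exp (θ j * Complex.I)) *
      ∏ j, Complex.exp (-(α j * θ j * Complex.I)))
    (Filter.Eventually.of_forall fun θ => by
      simpa [Complex.norm_exp] using hM _ fun j => by simp [Complex.norm_exp, abs_of_nonneg (hρ j)])
  rw [integral_torusMeasure_mul_exp_eq_coeff hf hρ, torusMeasure_real_univ] at hbound
  simp only [norm_mul, norm_prod, norm_pow, Complex.norm_real, Complex.norm_ofNat,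
    norm_of_nonneg (hρ _), norm_of_nonneg pi_pos.le] at hbound
  exact le_of_mul_le_mul_right hbound (by positivity)

lemma factorial_le_exp_one_mul_sqrt_mul_pow {n : ℕ} (hn : n ≠ 0) :
    (n ! : ℝ) ≤ exp 1 * √n * (n / exp 1) ^ n := by
  obtain ⟨m, rfl⟩ := Nat.exists_eq_add_one_of_ne_zero hn
  have h : Stirling.stirlingSeq (m + 1) ≤ Stirling.stirlingSeq 1 :=
    Stirling.stirlingSeq'_antitone (Nat.zero_le m)
  rw [Stirling.stirlingSeq_one, Stirling.stirlingSeq,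
    div_le_div_iff₀ (by positivity) (by positivity), sqrt_mul' _ (by positivity)] at h
  refine le_of_mul_le_mul_right ?_ (by positivity : (0:ℝ) < √2)
  linarith

lemma factorial_mul_exp_le {θ : ℝ} (h0 : 0 ≤ θ) (h1 : θ < 1) (n : ℕ) :
    (n ! : ℝ) * exp (θ * n) ≤ n ^ n / (1 - θ) := by
  rcases Nat.eq_zero_or_pos n with rfl | hn
  · simpa using one_le_inv_iff₀.mpr ⟨by linarith, by linarith⟩
  set s := 1 - θ
  have hs : 0 < s := by simp [s]; linarith
  have hsn : s * n * exp (-(s * n)) ≤ exp (-1) := by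
    rw [← le_div_iff₀ (exp_pos _), ← exp_sub, show -1 - -(s * n) = s * n - 1 by ring]
    linarith [add_one_le_exp (s * n - 1)]
  have hn1 : (1 : ℝ) ≤ n := by exact_mod_cast hn
  calc (n ! : ℝ) * exp (θ * n) ≤ exp 1 * √n * (n / exp 1) ^ n * exp (θ * n) := by
        gcongr; exact factorial_le_exp_one_mul_sqrt_mul_pow hn.ne'
    _ ≤ exp 1 * n * (n / exp 1) ^ n * exp (θ * n) := by
        gcongr; exact sqrt_le_self_iff.mpr (Or.inr hn1)
    _ = n ^ n * exp 1 * (s * n * exp (-(s * n))) / s := by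
        rw [div_pow, exp_one_pow, show -(s * n) = θ * n - n by ring, exp_sub]
        field_simp
    _ ≤ n ^ n * exp 1 * exp (-1) / s := by gcongr
    _ = n ^ n / s := by rw [mul_assoc, ← exp_add]; simp

/-- With `a = b`, this radius minimises `exp (a ρ ^ (2 / (2τ+1))) / ρ ^ n`. -/
noncomputable def cauchyRadius (τ b : ℝ) (n : ℕ) : ℝ :=
  ((2 * τ + 1) * n / (2 * b)) ^ ((2 * τ + 1) / 2)

lemma cauchyRadius_nonneg {τ b : ℝ} (hτ : -(1 / 2) < τ) (hb : 0 < b) (n : ℕ) :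
    0 ≤ cauchyRadius τ b n :=
  rpow_nonneg (div_nonneg (mul_nonneg (by linarith) n.cast_nonneg) (by linarith)) _

lemma cauchyRadius_pow_pos {τ b : ℝ} (hτ : -(1 / 2) < τ) (hb : 0 < b) (n : ℕ) :
    0 < cauchyRadius τ b n ^ n := by
  rcases Nat.eq_zero_or_pos n with rfl | hn
  · exact one_pos
  · have hk : 0 < 2 * τ + 1 := by linarith
    exact pow_pos (rpow_pos_of_pos (by positivity) _) n

lemma sqrt_factorial_mul_exp_le {τ a b : ℝ} (hτ : -(1 / 2) < τ) (ha : 0 ≤ a) (hab : a < b)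
    (n : ℕ) :
    √(n ! : ℝ) * exp (a * cauchyRadius τ b n ^ (2 / (2 * τ + 1))) ≤
      (1 - a / b)⁻¹ ^ ((2 * τ + 1) / 2) * cauchyRadius τ b n ^ n *
        ((2 * b / (2 * τ + 1)) ^ ((2 * τ + 1) / 2 * (n : ℝ)) * (n ! : ℝ) ^ (-τ)) := by
  set k := 2 * τ + 1 with hk_def
  set m := k / 2 with hm_def
  set x := k * n / (2 * b) with hx_def
  set N := (n ! : ℝ)
  have hk : 0 < k := by linarith
  have hb : 0 < b := ha.trans_lt hab
  have hθ : 0 ≤ a / b := by positivity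
  have hθ1 : a / b < 1 := (div_lt_one hb).mpr hab
  have hx : 0 ≤ x := by positivity
  have hN : 0 < N := by positivity
  have hρ_rpow : cauchyRadius τ b n ^ (2 / k) = x := by
    rw [cauchyRadius, ← rpow_mul hx, show m * (2 / k) = 1 by rw [hm_def]; field_simp, rpow_one]
  have hρ_pow : cauchyRadius τ b n ^ n * (2 * b / k) ^ (m * n) = (n : ℝ) ^ (m * n) := by
    rw [cauchyRadius, ← rpow_mul_natCast hx, ← mul_rpow hx (by positivity),
      show x * (2 * b / k) = n by rw [hx_def]; field_simp]
  have hsqrt : √N = N ^ m * N ^ (-τ) := by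
    rw [sqrt_eq_rpow, ← rpow_add hN]; congr 1; ring
  have hexp : exp (a * x) = exp (a / b * n) ^ m := by
    rw [← exp_mul, hx_def, hm_def]; congr 1; field_simp
  calc √N * exp (a * cauchyRadius τ b n ^ (2 / k))
      = (N * exp (a / b * n)) ^ m * N ^ (-τ) := by
        rw [hρ_rpow, hsqrt, hexp, mul_rpow hN.le (exp_pos _).le]; ring
    _ ≤ ((n : ℝ) ^ n / (1 - a / b)) ^ m * N ^ (-τ) := by
        gcongr; exact factorial_mul_exp_le hθ hθ1 n
    _ = (1 - a / b)⁻¹ ^ m * (cauchyRadius τ b n ^ n * (2 * b / k) ^ (m * n)) * N ^ (-τ) := by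
        rw [hρ_pow, div_eq_inv_mul, mul_rpow (by simp; linarith) (by positivity),
          ← rpow_natCast, ← rpow_mul (by positivity), mul_comm (n : ℝ) m]
    _ = _ := by ring

lemma prod_sqrt_factorial_mul_exp_le {τ : ℝ} (hτ : -(1 / 2) < τ) {a b : ι → ℝ}
    (ha : ∀ j, 0 ≤ a j) (hab : ∀ j, a j < b j) (α : ι → ℕ) :
    √(∏ j, ((α j)! : ℝ)) * exp (∑ j, a j * cauchyRadius τ (b j) (α j) ^ (2 / (2 * τ + 1))) ≤
      (∏ j, (1 - a j / b j)⁻¹ ^ ((2 * τ + 1) / 2)) * (∏ j, cauchyRadius τ (b j) (α j) ^ α j) *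
        ∏ j, (2 * b j / (2 * τ + 1)) ^ ((2 * τ + 1) / 2 * (α j : ℝ)) * ((α j)! : ℝ) ^ (-τ) := by
  rw [sqrt_prod _ fun j _ => by positivity, exp_sum, ← prod_mul_distrib, ← prod_mul_distrib,
    ← prod_mul_distrib]
  exact prod_le_prod (fun j _ => by positivity) fun j _ =>
    sqrt_factorial_mul_exp_le hτ (ha j) (hab j) (α j)

theorem growth_implies_coeff_bound (d : ℕ) (τ : ℝ) (hτ : τ > -(1/2))
    (r₀ r : Fin d → ℝ) (hr₀ : ∀ j, 0 < r₀ j) (hlt : ∀ j, r₀ j < r j)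
    (c : (Fin d → ℕ) → ℂ) (F : (Fin d → ℂ) → ℂ)
    (hF : ∀ z : Fin d → ℂ,
      HasSum (fun α : Fin d → ℕ =>
        c α * (∏ j, (z j) ^ (α j)) / (Real.sqrt (∏ j, (Nat.factorial (α j) : ℝ)) : ℂ)) (F z))
    (C : ℝ)
    (hFbound : ∀ z : Fin d → ℂ,
      ‖F z‖ ≤ C * Real.exp (∑ j, r₀ j * ‖z j‖ ^ (2/(2*τ+1)))) :
    ∃ C' : ℝ, 0 < C' ∧ ∀ α : Fin d → ℕ,
      ‖c α‖ ≤ C' * ∏ j, (2 * r j / (2*τ+1)) ^ (((2*τ+1)/2) * (α j : ℝ))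
                        * (Nat.factorial (α j) : ℝ) ^ (-τ) := by
  have hr : ∀ j, 0 < r j := fun j => (hr₀ j).trans (hlt j)
  have hK : ∀ j, 0 < (1 - r₀ j / r j)⁻¹ ^ ((2 * τ + 1) / 2) := fun j =>
    rpow_pos_of_pos (inv_pos.mpr (sub_pos.mpr ((div_lt_one (hr j)).mpr (hlt j)))) _
  refine ⟨max C 1 * ∏ j, (1 - r₀ j / r j)⁻¹ ^ ((2 * τ + 1) / 2),
    mul_pos (lt_max_of_lt_right one_pos) (prod_pos fun j _ => hK j), fun α => ?_⟩
  set ρ : Fin d → ℝ := fun j => cauchyRadius τ (r j) (α j)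
  set S := √(∏ j, ((α j)! : ℝ))
  have hS : 0 < S := by positivity
  have hcauchy : ‖c α‖ / S * ∏ j, ρ j ^ α j ≤
      C * exp (∑ j, r₀ j * ρ j ^ (2 / (2 * τ + 1))) := by
    have h := norm_coeff_mul_prod_pow_le (a := fun β => c β / (√(∏ j, ((β j)! : ℝ)) : ℂ))
      (fun z => by simpa only [div_mul_eq_mul_div] using hF z)
      (fun j => cauchyRadius_nonneg hτ (hr j) (α j))
      (M := C * exp (∑ j, r₀ j * ρ j ^ (2 / (2 * τ + 1))))
      (fun z hz => (hFbound z).trans_eq (by simp only [hz, ρ])) α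
    rwa [norm_div, Complex.norm_real, norm_of_nonneg (sqrt_nonneg _)] at h
  refine le_of_mul_le_mul_right ?_
    (prod_pos (s := univ) fun j _ => cauchyRadius_pow_pos hτ (hr j) (α j))
  calc ‖c α‖ * ∏ j, ρ j ^ α j = ‖c α‖ / S * (∏ j, ρ j ^ α j) * S := by field_simp
    _ ≤ max C 1 * (S * exp (∑ j, r₀ j * ρ j ^ (2 / (2 * τ + 1)))) := by
        rw [mul_left_comm, mul_comm]
        exact mul_le_mul_of_nonneg_left (hcauchy.trans
          (mul_le_mul_of_nonneg_right (le_max_left _ _) (exp_pos _).le)) hS.le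
    _ ≤ _ := by
        grw [prod_sqrt_factorial_mul_exp_le hτ (fun j => (hr₀ j).le) hlt α]
        exact le_of_eq (by ring)
end

section
/- Let s ∈ (0,1/2) and 0 < r₀ < r (in ℝ_+, one dimension). If F(z) = Σ_{α∈ℕ} c(α) z^α/√(α!) is entire on ℂ and satisfies |F(z)| ≲ e^{r₀(log(1+|z|))^{1/(1-2s)}}, then |c(α)| ≲ e^{-R α^{1/(2s)}} for all α ∈ ℕ, where R = s((1-2s)/r)^{(1-2s)/(2s)}. -/
/-!
Cauchy's estimate on the circle `‖z‖ = exp T` bounds `‖c α‖` by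
`C · √α! · exp (r₀ (T + 1) ^ β - α T)`, `β = 1 / (1 - 2s)`. With `b = (1 - 2s) / (2s)` and
`K = ((1 - 2s) / r) ^ b`, the radius `T + 1 = K α ^ b` minimises `r (T + 1) ^ β - α T`; for it
`r₀ (T + 1) ^ β - α (T + 1) = (r₀ (1 - 2s) / r - 1) K α ^ (1 / (2s)) ≤ -2s K α ^ (1 / (2s))`.
The remaining `α / 2 · log (α + 1) + α` (from `√α!` and the shift by one) is `o(α ^ (1 / (2s)))`,
so it is absorbed into half of the main term for large `α`, and the finitely many small `α` into
the constant.
-/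

open Real Filter Asymptotics Metric FormalMultilinearSeries

theorem hasFPowerSeriesOnBall_ofScalars_of_hasSum {a : ℕ → ℂ} {F : ℂ → ℂ}
    (hF : ∀ z, HasSum (fun n => a n * z ^ n) (F z)) :
    HasFPowerSeriesOnBall F (ofScalars ℂ a) 0 ⊤ where
  r_le := ENNReal.le_of_forall_nnreal_lt fun q _ =>
    (ofScalars ℂ a).le_radius_of_tendsto (l := 0) <| by
      simpa [ofScalars_norm] using (hF q).summable.tendsto_atTop_zero.norm
  r_pos := ENNReal.zero_lt_top
  hasSum {y} _ := by simpa [ofScalars_apply_eq, mul_comm] using hF y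

theorem norm_coeff_le_of_hasSum_of_norm_le_on_sphere {a : ℕ → ℂ} {F : ℂ → ℂ}
    (hF : ∀ z, HasSum (fun n => a n * z ^ n) (F z)) {R M : ℝ} (hR : 0 < R)
    (hM : ∀ z ∈ sphere (0 : ℂ) R, ‖F z‖ ≤ M) (n : ℕ) : ‖a n‖ ≤ M / R ^ n := by
  have hp := hasFPowerSeriesOnBall_ofScalars_of_hasSum hF
  have hF_an : ∀ z, AnalyticAt ℂ F z := fun z => hp.analyticAt_of_mem (by simp)
  have hcoeff : a = fun n => iteratedDeriv n F 0 / n.factorial :=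
    ofScalars_series_injective ℂ ℂ
      (hp.hasFPowerSeriesAt.eq_formalMultilinearSeries (hF_an 0).hasFPowerSeriesAt)
  have hCauchy := Complex.norm_iteratedDeriv_le_of_forall_mem_sphere_norm_le n hR
    (show Differentiable ℂ F from fun z => (hF_an z).differentiableAt).diffContOnCl hM
  rw [hcoeff, norm_div, Complex.norm_natCast, div_le_iff₀ (by positivity)]
  exact hCauchy.trans_eq (by ring)

theorem Real.log_one_add_exp_le {T : ℝ} (hT : 0 ≤ T) : log (1 + exp T) ≤ T + 1 := by
  have h2 : 1 + exp T ≤ 2 * exp T := by linarith [one_le_exp hT]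
  calc log (1 + exp T) ≤ log (2 * exp T) := log_le_log (by positivity) h2
    _ = log 2 + T := by rw [log_mul two_ne_zero (exp_pos T).ne', log_exp]
    _ ≤ T + 1 := by linarith [log_two_lt_d9]

theorem Real.sqrt_factorial_le_exp (n : ℕ) :
    √(n.factorial : ℝ) ≤ exp (n / 2 * log (n + 1)) := by
  have hfac : (n.factorial : ℝ) ≤ (n + 1) ^ n := by
    exact_mod_cast (Nat.factorial_le_pow n).trans (Nat.pow_le_pow_left n.le_succ n)
  calc √(n.factorial : ℝ) ≤ √((n + 1) ^ n) := sqrt_le_sqrt hfac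
    _ = exp (n / 2 * log (n + 1)) := by
      rw [sqrt_eq_rpow, ← rpow_natCast, ← rpow_mul (by positivity),
        rpow_def_of_pos (by positivity)]
      ring_nf

theorem norm_coeff_le_of_norm_le_exp_log_rpow {c : ℕ → ℂ} {F : ℂ → ℂ}
    (hF : ∀ z : ℂ, HasSum (fun α : ℕ => c α * z ^ α / (√(α.factorial : ℝ) : ℂ)) (F z))
    {C r₀ β : ℝ} (hC : 0 ≤ C) (hr₀ : 0 ≤ r₀) (hβ : 0 ≤ β)
    (hFbound : ∀ z : ℂ, ‖F z‖ ≤ C * exp (r₀ * log (1 + ‖z‖) ^ β)) (α : ℕ) {T : ℝ}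
    (hT : 0 ≤ T) :
    ‖c α‖ ≤ C * exp (α / 2 * log (α + 1) + r₀ * (T + 1) ^ β - α * T) := by
  have hsqrt : 0 < √(α.factorial : ℝ) := sqrt_pos.2 (mod_cast α.factorial_pos)
  have hsphere : ∀ z ∈ sphere (0 : ℂ) (exp T), ‖F z‖ ≤ C * exp (r₀ * (T + 1) ^ β) := by
    intro z hz
    rw [mem_sphere_zero_iff_norm] at hz
    refine (hFbound z).trans ?_
    have hlog : 0 ≤ log (1 + exp T) := log_nonneg (by linarith [exp_pos T])
    rw [hz]
    gcongr
    exact log_one_add_exp_le hT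
  have hcauchy := norm_coeff_le_of_hasSum_of_norm_le_on_sphere
    (a := fun α => c α / (√(α.factorial : ℝ) : ℂ))
    (fun z => (hF z).congr_fun fun n => div_mul_eq_mul_div _ _ _) (exp_pos T) hsphere α
  rw [norm_div, Complex.norm_real, norm_of_nonneg hsqrt.le, div_le_iff₀ hsqrt] at hcauchy
  calc ‖c α‖ ≤ C * exp (r₀ * (T + 1) ^ β) / exp T ^ α * √(α.factorial : ℝ) := hcauchy
    _ ≤ C * exp (r₀ * (T + 1) ^ β) / exp T ^ α * exp (α / 2 * log (α + 1)) := by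
      gcongr
      exact sqrt_factorial_le_exp α
    _ = C * exp (α / 2 * log (α + 1) + r₀ * (T + 1) ^ β - α * T) := by
      rw [← exp_nat_mul, exp_sub, exp_add]
      ring

theorem exponent_main_terms_le {s r₀ r x : ℝ} (hs : 0 < s) (hs' : s < 1 / 2) (hr : 0 < r)
    (hr₀ : r₀ ≤ r) (hx : 0 ≤ x) :
    r₀ * (((1 - 2 * s) / r) ^ ((1 - 2 * s) / (2 * s)) * x ^ ((1 - 2 * s) / (2 * s)))
        ^ (1 / (1 - 2 * s))
      - x * (((1 - 2 * s) / r) ^ ((1 - 2 * s) / (2 * s)) * x ^ ((1 - 2 * s) / (2 * s)))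
      ≤ -(2 * s * ((1 - 2 * s) / r) ^ ((1 - 2 * s) / (2 * s)) * x ^ (1 / (2 * s))) := by
  have hb : 1 + (1 - 2 * s) / (2 * s) = 1 / (2 * s) := by field_simp; ring
  have hbβ : (1 - 2 * s) / (2 * s) * (1 / (1 - 2 * s)) = 1 / (2 * s) := by
    field_simp [show 1 - 2 * s ≠ 0 by linarith]
  have hr₀q : r₀ * ((1 - 2 * s) / r) ≤ 1 - 2 * s := by
    calc r₀ * ((1 - 2 * s) / r) = r₀ / r * (1 - 2 * s) := by ring
      _ ≤ 1 - 2 * s := mul_le_of_le_one_left (by linarith) ((div_le_one hr).2 hr₀)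
  set b := (1 - 2 * s) / (2 * s)
  set q := (1 - 2 * s) / r
  have hq : 0 < q := div_pos (by linarith) hr
  have hpow : (q ^ b * x ^ b) ^ (1 / (1 - 2 * s)) = q * q ^ b * x ^ (1 / (2 * s)) := by
    rw [mul_rpow (by positivity) (by positivity), ← rpow_mul hq.le, ← rpow_mul hx, hbβ, ← hb,
      rpow_one_add' hq.le (by rw [hb]; positivity)]
  have hx' : x * (q ^ b * x ^ b) = q ^ b * x ^ (1 / (2 * s)) := by
    rw [← hb, rpow_one_add' hx (by rw [hb]; positivity)]; ring
  rw [hpow, hx']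
  have : 0 ≤ q ^ b * x ^ (1 / (2 * s)) := by positivity
  nlinarith

theorem eventually_mul_log_add_le_rpow {b ε : ℝ} (hb : 0 < b) (hε : 0 < ε) (A : ℝ) :
    ∀ᶠ x : ℝ in atTop, x * (log (x + 1) + A) ≤ ε * x ^ (1 + b) := by
  have hlittle : (fun x => log x + (A + 1)) =o[atTop] (fun x => x ^ b) :=
    (isLittleO_log_rpow_atTop hb).add <| isLittleO_const_left.2 <| Or.inr <|
      tendsto_norm_atTop_atTop.comp (tendsto_rpow_atTop hb)
  filter_upwards [hlittle.bound hε, eventually_ge_atTop 1] with x hx hx1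
  have hlog : log (x + 1) ≤ log x + 1 := by
    calc log (x + 1) ≤ log (2 * x) := log_le_log (by linarith) (by linarith)
      _ = log 2 + log x := log_mul two_ne_zero (by positivity)
      _ ≤ log x + 1 := by linarith [log_two_lt_d9]
  calc x * (log (x + 1) + A) ≤ x * (ε * x ^ b) := by
        gcongr
        calc log (x + 1) + A ≤ ‖log x + (A + 1)‖ := by
              rw [norm_eq_abs]; linarith [le_abs_self (log x + (A + 1))]
          _ ≤ ε * ‖x ^ b‖ := hx
          _ = ε * x ^ b := by rw [norm_of_nonneg (by positivity)]
    _ = ε * x ^ (1 + b) := by rw [rpow_one_add' (by positivity) (by positivity)]; ring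

theorem eventually_cauchy_exponent_le {s r₀ r : ℝ} (hs : 0 < s) (hs' : s < 1 / 2)
    (hr : 0 < r) (hr₀ : r₀ ≤ r) :
    ∀ᶠ x : ℝ in atTop, x / 2 * log (x + 1)
      + r₀ * (((1 - 2 * s) / r) ^ ((1 - 2 * s) / (2 * s)) * x ^ ((1 - 2 * s) / (2 * s)))
          ^ (1 / (1 - 2 * s))
      - x * (((1 - 2 * s) / r) ^ ((1 - 2 * s) / (2 * s)) * x ^ ((1 - 2 * s) / (2 * s)) - 1)
      ≤ -(s * ((1 - 2 * s) / r) ^ ((1 - 2 * s) / (2 * s)) * x ^ (1 / (2 * s))) := by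
  have hb : 0 < (1 - 2 * s) / (2 * s) := div_pos (by linarith) (by linarith)
  have hK : 0 < ((1 - 2 * s) / r) ^ ((1 - 2 * s) / (2 * s)) :=
    rpow_pos_of_pos (div_pos (by linarith) hr) _
  have hexp : 1 + (1 - 2 * s) / (2 * s) = 1 / (2 * s) := by field_simp; ring
  filter_upwards [eventually_mul_log_add_le_rpow hb (mul_pos (mul_pos two_pos hs) hK) 2,
    eventually_ge_atTop 0] with x hlow hx
  rw [hexp] at hlow
  linarith [exponent_main_terms_le hs hs' hr hr₀ hx]

theorem exists_pos_forall_norm_le_mul_of_eventually {E : Type*} [NormedAddCommGroup E]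
    {f : ℕ → E} {g : ℕ → ℝ} {C : ℝ} (hg : ∀ n, 0 < g n)
    (h : ∀ᶠ n in atTop, ‖f n‖ ≤ C * g n) : ∃ C' > 0, ∀ n, ‖f n‖ ≤ C' * g n := by
  have hO : f =O[cofinite] g := by
    rw [Nat.cofinite_eq_atTop]
    exact IsBigO.of_bound C (h.mono fun n hn => by rwa [norm_of_nonneg (hg n).le])
  obtain ⟨C', hC'⟩ := (isBigO_cofinite_iff fun n hn => absurd hn (hg n).ne').1 hO
  refine ⟨max C' 1, by positivity, fun n => (hC' n).trans ?_⟩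
  rw [norm_of_nonneg (hg n).le]
  gcongr
  · exact (hg n).le
  · exact le_max_left _ _

theorem log_growth_implies_coeff_decay (s r₀ r : ℝ)
    (hs : 0 < s ∧ s < 1/2) (hr₀ : 0 < r₀) (hlt : r₀ < r)
    (c : ℕ → ℂ) (F : ℂ → ℂ)
    (hF : ∀ z : ℂ,
      HasSum (fun α : ℕ => c α * z ^ α / (Real.sqrt (Nat.factorial α : ℝ) : ℂ)) (F z))
    (C : ℝ)
    (hFbound : ∀ z : ℂ,
      ‖F z‖ ≤ C * Real.exp (r₀ * (Real.log (1 + ‖z‖)) ^ (1/(1-2*s)))) :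
    ∃ C' : ℝ, 0 < C' ∧ ∀ α : ℕ,
      ‖c α‖ ≤ C' * Real.exp (-(s * ((1-2*s)/r) ^ ((1-2*s)/(2*s)) * (α:ℝ) ^ (1/(2*s)))) := by
  obtain ⟨hs₀, hs₁⟩ := hs
  have hr : 0 < r := hr₀.trans hlt
  have hC : 0 ≤ C := nonneg_of_mul_nonneg_left ((norm_nonneg _).trans (hFbound 0)) (exp_pos _)
  have hK : 0 < ((1 - 2 * s) / r) ^ ((1 - 2 * s) / (2 * s)) :=
    rpow_pos_of_pos (div_pos (by linarith) hr) _
  have hradius : ∀ᶠ x : ℝ in atTop,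
      1 ≤ ((1 - 2 * s) / r) ^ ((1 - 2 * s) / (2 * s)) * x ^ ((1 - 2 * s) / (2 * s)) :=
    ((tendsto_rpow_atTop (div_pos (by linarith) (by linarith))).const_mul_atTop
      hK).eventually_ge_atTop 1
  refine exists_pos_forall_norm_le_mul_of_eventually (C := C) (fun α => exp_pos _) ?_
  filter_upwards [tendsto_natCast_atTop_atTop.eventually
    (hradius.and (eventually_cauchy_exponent_le hs₀ hs₁ hr hlt.le))] with α ⟨hT, hexp⟩
  refine (norm_coeff_le_of_norm_le_exp_log_rpow hF hC hr₀.le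
    (div_nonneg zero_le_one (by linarith)) hFbound α (sub_nonneg.2 hT)).trans ?_
  rw [sub_add_cancel]
  gcongr
end
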